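/- For every s < 0 and all x, y ∈ ℝ, the kernel entry L⁻_s is twice differentiable in each variable and satisfies ∂ₓ² L⁻_s(x,y) − x·L⁻_s(x,y) = −∫_{−∞}^0 z·e^{−z·s}·A(x+z)·A(y+z) dz = ∂_y² L⁻_s(x,y) − y·L⁻_s(x,y); in particular d²/dx² − x applied in the first variable agrees with d²/dy² − y applied in the second variable. -/

import Mathlib

/-!
Since `s < 0`, the weight `e^{-zs}` decays exponentially as `z → -∞`, while `A`, `A'` and
`A'' = t·A` grow at most polynomially, so both `x`-derivatives of `L⁻_s` may be taken under the
integral sign. The Airy equation `A''(x+z) = (x+z)·A(x+z)` then splits `∂ₓ²L⁻_s(x,y)` into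
`x·L⁻_s(x,y)` and the moment `-∫ z·e^{-zs}·A(x+z)·A(y+z) dz`, which is symmetric in `x` and
`y`; the `y`-side follows because `L⁻_s(x,y) = L⁻_s(y,x)`.
-/

open MeasureTheory Real Set

/-- `L⁻_s(x,y) = −∫_{−∞}^0 e^{−z·s}·A(x+z)·A(y+z) dz`, the extended Airy kernel
entry for `s = τ_i − τ_j < 0`. -/
noncomputable def Lminus (A : ℝ → ℝ) (s x y : ℝ) : ℝ :=
  -∫ z in Set.Iio (0 : ℝ), Real.exp (-(z * s)) * A (x + z) * A (y + z)

open Filter Asymptotics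

lemma one_add_abs_add_le_mul (a b : ℝ) : 1 + |a + b| ≤ (1 + |a|) * (1 + |b|) := by
  nlinarith [abs_add_le a b, abs_nonneg a, abs_nonneg b]

lemma one_add_abs_pow_isBigO_exp_neg_atBot (n : ℕ) {c : ℝ} (hc : 0 < c) :
    (fun z : ℝ => (1 + |z|) ^ n) =O[atBot] fun z => exp (-(c * z)) := by
  -- `t ^ n = O(e^{ct})` at `+∞`, transported along `t = 1 - z`, which equals `1 + |z|` for `z ≤ 0`.
  have h := (isLittleO_pow_exp_pos_mul_atTop n hc).isBigO.comp_tendsto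
    (tendsto_atTop_add_const_left atBot 1 tendsto_neg_atBot_atTop)
  refine (h.trans (isBigO_of_le' (c := exp c) atBot fun z => ?_)).congr' ?_ .rfl
  · simp only [Function.comp_apply, norm_eq_abs, abs_exp, ← exp_add]
    exact le_of_eq (by ring_nf)
  · filter_upwards [eventually_le_atBot 0] with z hz
    simp [abs_of_nonpos hz]

lemma integrableOn_Iic_one_add_abs_pow_mul_exp (n : ℕ) {c : ℝ} (hc : 0 < c) (a : ℝ) :
    IntegrableOn (fun z => (1 + |z|) ^ n * exp (c * z)) (Iic a) := by
  have hcont : Continuous fun z => (1 + |z|) ^ n * exp (c * z) := by fun_prop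
  refine (hcont.locallyIntegrable.locallyIntegrableOn _).integrableOn_of_isBigO_atBot
    (g := fun z => exp (c / 2 * z)) ?_
    ⟨Iic a, Iic_mem_atBot a, integrableOn_exp_mul_Iic (half_pos hc) a⟩
  -- half of the exponential decay absorbs the polynomial factor
  refine ((one_add_abs_pow_isBigO_exp_neg_atBot n (half_pos hc)).mul
    (isBigO_refl (fun z => exp (c * z)) _)).congr_right fun z => ?_
  rw [← exp_add]
  ring_nf

section ShiftedKernel

variable {s M : ℝ} {n : ℕ} {f f' g : ℝ → ℝ}

lemma abs_exp_mul_shift_mul_shift_le (hf : ∀ t, |f t| ≤ M * (1 + |t|) ^ n)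
    (hg : ∀ t, |g t| ≤ M * (1 + |t|) ^ n) (a b z : ℝ) :
    |exp (-(z * s)) * f (a + z) * g (b + z)|
      ≤ M ^ 2 * ((1 + |a|) * (1 + |b|)) ^ n * ((1 + |z|) ^ (2 * n) * exp (-s * z)) := by
  have hM : 0 ≤ M := by simpa using (abs_nonneg _).trans (hf 0)
  have shift : ∀ {h : ℝ → ℝ}, (∀ t, |h t| ≤ M * (1 + |t|) ^ n) →
      ∀ c, |h (c + z)| ≤ M * ((1 + |c|) * (1 + |z|)) ^ n := fun hh c =>
    (hh _).trans (by gcongr; exact one_add_abs_add_le_mul c z)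
  calc |exp (-(z * s)) * f (a + z) * g (b + z)|
      = exp (-s * z) * (|f (a + z)| * |g (b + z)|) := by
        rw [abs_mul, abs_mul, abs_exp, neg_mul, mul_comm s, mul_assoc]
    _ ≤ exp (-s * z) *
          ((M * ((1 + |a|) * (1 + |z|)) ^ n) * (M * ((1 + |b|) * (1 + |z|)) ^ n)) := by
        gcongr
        exacts [shift hf a, shift hg b]
    _ = M ^ 2 * ((1 + |a|) * (1 + |b|)) ^ n * ((1 + |z|) ^ (2 * n) * exp (-s * z)) := by
        rw [two_mul, pow_add, mul_pow, mul_pow, mul_pow]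
        ring

lemma integrableOn_Iio_pow_mul_exp_mul_shift_mul_shift (hs : s < 0) (hfc : Continuous f)
    (hgc : Continuous g) (hf : ∀ t, |f t| ≤ M * (1 + |t|) ^ n)
    (hg : ∀ t, |g t| ≤ M * (1 + |t|) ^ n) (k : ℕ) (a b : ℝ) :
    IntegrableOn (fun z => z ^ k * (exp (-(z * s)) * f (a + z) * g (b + z))) (Iio 0) := by
  have hbound := ((integrableOn_Iic_one_add_abs_pow_mul_exp (k + 2 * n) (neg_pos.2 hs) 0).mono_set
    Iio_subset_Iic_self).const_mul (M ^ 2 * ((1 + |a|) * (1 + |b|)) ^ n)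
  refine hbound.mono' (by fun_prop) (ae_of_all _ fun z => ?_)
  calc ‖z ^ k * (exp (-(z * s)) * f (a + z) * g (b + z))‖
      = |z| ^ k * |exp (-(z * s)) * f (a + z) * g (b + z)| := by
        rw [norm_eq_abs, abs_mul, abs_pow]
    _ ≤ (1 + |z|) ^ k *
          (M ^ 2 * ((1 + |a|) * (1 + |b|)) ^ n * ((1 + |z|) ^ (2 * n) * exp (-s * z))) := by
        gcongr
        · linarith
        · exact abs_exp_mul_shift_mul_shift_le hf hg a b z
    _ = M ^ 2 * ((1 + |a|) * (1 + |b|)) ^ n * ((1 + |z|) ^ (k + 2 * n) * exp (-s * z)) := by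
        ring

lemma hasDerivAt_integral_Iio_exp_mul_shift_mul_shift (hs : s < 0)
    (hderiv : ∀ t, HasDerivAt f (f' t) t) (hf'c : Continuous f') (hgc : Continuous g)
    (hf : ∀ t, |f t| ≤ M * (1 + |t|) ^ n) (hf' : ∀ t, |f' t| ≤ M * (1 + |t|) ^ n)
    (hg : ∀ t, |g t| ≤ M * (1 + |t|) ^ n) (x y : ℝ) :
    HasDerivAt (fun u => ∫ z in Iio 0, exp (-(z * s)) * f (u + z) * g (y + z))
      (∫ z in Iio 0, exp (-(z * s)) * f' (x + z) * g (y + z)) x := by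
  have hfc : Continuous f := continuous_iff_continuousAt.2 fun t => (hderiv t).continuousAt
  have hint := integrableOn_Iio_pow_mul_exp_mul_shift_mul_shift hs hfc hgc hf hg 0 x y
  simp only [pow_zero, one_mul] at hint
  have hbound := ((integrableOn_Iic_one_add_abs_pow_mul_exp (2 * n) (neg_pos.2 hs) 0).mono_set
    Iio_subset_Iic_self).const_mul (M ^ 2 * ((2 + |x|) * (1 + |y|)) ^ n)
  refine (hasDerivAt_integral_of_dominated_loc_of_deriv_le
    (F := fun u z => exp (-(z * s)) * f (u + z) * g (y + z))
    (F' := fun u z => exp (-(z * s)) * f' (u + z) * g (y + z)) (Metric.ball_mem_nhds x one_pos)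
    (.of_forall fun u => (by fun_prop : Continuous _).aestronglyMeasurable) hint
    (by fun_prop) (ae_of_all _ fun z u hu => ?_) hbound
    (ae_of_all _ fun z u _ => ?_)).2
  · have hu' : 1 + |u| ≤ 2 + |x| := by
      have := abs_sub_abs_le_abs_sub u x
      rw [Metric.mem_ball, dist_eq_norm, norm_eq_abs] at hu
      linarith
    refine (abs_exp_mul_shift_mul_shift_le hf' hg u y z).trans ?_
    gcongr
  · exact (((hderiv (u + z)).comp u ((hasDerivAt_id u).add_const z)).const_mul _).mul_const _
      |>.congr_deriv (by simp)

end ShiftedKernel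

lemma abs_le_mul_one_add_abs_of_decay {f : ℝ → ℝ} {C : ℝ}
    (hpos : ∀ t, 0 ≤ t → |f t| ≤ C * exp (-t))
    (hneg : ∀ t, t ≤ 0 → |f t| ≤ C * (1 + |t|))
    (t : ℝ) : |f t| ≤ C * (1 + |t|) := by
  rcases le_total t 0 with ht | ht
  · exact hneg t ht
  have hC : 0 ≤ C := by simpa using (abs_nonneg _).trans (hneg 0 le_rfl)
  refine (hpos t ht).trans (mul_le_mul_of_nonneg_left ?_ hC)
  linarith [exp_le_one_iff.2 (neg_nonpos.2 ht), abs_nonneg t]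

lemma abs_le_mul_one_add_abs_sq {f : ℝ → ℝ} {M : ℝ} (hf : ∀ t, |f t| ≤ M * (1 + |t|))
    (t : ℝ) : |f t| ≤ M * (1 + |t|) ^ 2 := by
  have hM : 0 ≤ M := by simpa using (abs_nonneg _).trans (hf 0)
  refine (hf t).trans ?_
  gcongr
  nlinarith [abs_nonneg t]

lemma Lminus_comm (A : ℝ → ℝ) (s x y : ℝ) : Lminus A s x y = Lminus A s y x := by
  simp only [Lminus, mul_right_comm _ (A (x + _))]

section Airy

variable {A : ℝ → ℝ} {s M : ℝ}

theorem hasDerivAt_Lminus_left (hA : ContDiff ℝ 2 A) (hAM : ∀ t, |A t| ≤ M * (1 + |t|))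
    (hA'M : ∀ t, |deriv A t| ≤ M * (1 + |t|)) (hs : s < 0) (x y : ℝ) :
    HasDerivAt (fun u => Lminus A s u y)
      (-∫ z in Iio 0, exp (-(z * s)) * deriv A (x + z) * A (y + z)) x :=
  have hAd : Differentiable ℝ A := hA.differentiable (by norm_num)
  (hasDerivAt_integral_Iio_exp_mul_shift_mul_shift hs (fun t => (hAd t).hasDerivAt)
    hA.differentiable_deriv_two.continuous hAd.continuous (abs_le_mul_one_add_abs_sq hAM)
    (abs_le_mul_one_add_abs_sq hA'M) (abs_le_mul_one_add_abs_sq hAM) x y).neg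

theorem hasDerivAt_deriv_Lminus_left (hA : ContDiff ℝ 2 A)
    (hAiry : ∀ t, deriv (deriv A) t = t * A t)
    (hAM : ∀ t, |A t| ≤ M * (1 + |t|)) (hA'M : ∀ t, |deriv A t| ≤ M * (1 + |t|))
    (hs : s < 0) (x y : ℝ) :
    HasDerivAt (deriv fun u => Lminus A s u y)
      (-∫ z in Iio 0, exp (-(z * s)) * deriv (deriv A) (x + z) * A (y + z)) x := by
  have hA''M : ∀ t, |deriv (deriv A) t| ≤ M * (1 + |t|) ^ 2 := fun t => by
    rw [hAiry, abs_mul, sq]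
    have hM : 0 ≤ M := by simpa using (abs_nonneg _).trans (hAM 0)
    nlinarith [hAM t, abs_nonneg (A t), abs_nonneg t]
  have hA''c : Continuous (deriv (deriv A)) := by
    rw [funext hAiry]
    exact continuous_id.mul hA.continuous
  rw [funext fun u => (hasDerivAt_Lminus_left hA hAM hA'M hs u y).deriv]
  exact (hasDerivAt_integral_Iio_exp_mul_shift_mul_shift hs
    (fun t => (hA.differentiable_deriv_two t).hasDerivAt) hA''c hA.continuous
    (abs_le_mul_one_add_abs_sq hA'M) hA''M (abs_le_mul_one_add_abs_sq hAM) x y).neg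

lemma integral_exp_mul_deriv_deriv_airy (hAc : Continuous A)
    (hAiry : ∀ t, deriv (deriv A) t = t * A t) (hAM : ∀ t, |A t| ≤ M * (1 + |t|)) (hs : s < 0)
    (x y : ℝ) :
    (∫ z in Iio 0, exp (-(z * s)) * deriv (deriv A) (x + z) * A (y + z))
      = x * (∫ z in Iio 0, exp (-(z * s)) * A (x + z) * A (y + z))
        + ∫ z in Iio 0, z * exp (-(z * s)) * A (x + z) * A (y + z) := by
  have hint := fun k => integrableOn_Iio_pow_mul_exp_mul_shift_mul_shift hs hAc hAc
    (abs_le_mul_one_add_abs_sq hAM) (abs_le_mul_one_add_abs_sq hAM) k x y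
  have hint0 : IntegrableOn (fun z => exp (-(z * s)) * A (x + z) * A (y + z)) (Iio 0) := by
    simpa only [pow_zero, one_mul] using hint 0
  have hint1 : IntegrableOn (fun z => z * exp (-(z * s)) * A (x + z) * A (y + z)) (Iio 0) := by
    simpa only [pow_one, mul_assoc] using hint 1
  rw [← integral_const_mul, ← integral_add (hint0.const_mul x) hint1]
  refine setIntegral_congr_fun measurableSet_Iio fun z _ => ?_
  simp only [hAiry]
  ring

theorem airy_operator_Lminus_left (hA : ContDiff ℝ 2 A)
    (hAiry : ∀ t, deriv (deriv A) t = t * A t)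
    (hAM : ∀ t, |A t| ≤ M * (1 + |t|)) (hA'M : ∀ t, |deriv A t| ≤ M * (1 + |t|))
    (hs : s < 0) (x y : ℝ) :
    DifferentiableAt ℝ (fun u => Lminus A s u y) x ∧
    DifferentiableAt ℝ (deriv fun u => Lminus A s u y) x ∧
    deriv (deriv fun u => Lminus A s u y) x - x * Lminus A s x y
      = -∫ z in Iio 0, z * exp (-(z * s)) * A (x + z) * A (y + z) := by
  have hderiv2 := hasDerivAt_deriv_Lminus_left hA hAiry hAM hA'M hs x y
  refine ⟨(hasDerivAt_Lminus_left hA hAM hA'M hs x y).differentiableAt,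
    hderiv2.differentiableAt, ?_⟩
  rw [hderiv2.deriv, integral_exp_mul_deriv_deriv_airy hA.continuous hAiry hAM hs, Lminus]
  ring

end Airy

theorem lminus_airy_operator_symm_general
    (A : ℝ → ℝ) (hA : ContDiff ℝ 2 A)
    (hAiry : ∀ t : ℝ, deriv (deriv A) t = t * A t)
    (C : ℝ)
    (hA1 : ∀ t : ℝ, 0 ≤ t → |A t| ≤ C * Real.exp (-t))
    (hA1' : ∀ t : ℝ, 0 ≤ t → |deriv A t| ≤ C * Real.exp (-t))
    (hA2 : ∀ t : ℝ, t ≤ 0 → |A t| ≤ C * (1 + |t|))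
    (hA2' : ∀ t : ℝ, t ≤ 0 → |deriv A t| ≤ C * (1 + |t|))
    (s : ℝ) (hs : s < 0) (x y : ℝ) :
    DifferentiableAt ℝ (fun x' : ℝ => Lminus A s x' y) x ∧
    DifferentiableAt ℝ (deriv (fun x' : ℝ => Lminus A s x' y)) x ∧
    DifferentiableAt ℝ (fun y' : ℝ => Lminus A s x y') y ∧
    DifferentiableAt ℝ (deriv (fun y' : ℝ => Lminus A s x y')) y ∧
    deriv (deriv (fun x' : ℝ => Lminus A s x' y)) x - x * Lminus A s x y
      = -∫ z in Set.Iio (0 : ℝ), z * Real.exp (-(z * s)) * A (x + z) * A (y + z) ∧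
    (-∫ z in Set.Iio (0 : ℝ), z * Real.exp (-(z * s)) * A (x + z) * A (y + z))
      = deriv (deriv (fun y' : ℝ => Lminus A s x y')) y - y * Lminus A s x y := by
  have hAM := abs_le_mul_one_add_abs_of_decay hA1 hA2
  have hA'M := abs_le_mul_one_add_abs_of_decay hA1' hA2'
  obtain ⟨hdx, hdx', hx⟩ := airy_operator_Lminus_left hA hAiry hAM hA'M hs x y
  obtain ⟨hdy, hdy', hy⟩ := airy_operator_Lminus_left hA hAiry hAM hA'M hs y x
  have hswap : (fun y' => Lminus A s x y') = fun y' => Lminus A s y' x :=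
    funext fun y' => Lminus_comm A s x y'
  have hmoment : (∫ z in Iio 0, z * exp (-(z * s)) * A (y + z) * A (x + z))
      = ∫ z in Iio 0, z * exp (-(z * s)) * A (x + z) * A (y + z) := by
    simp only [mul_right_comm _ (A (y + _))]
  rw [hswap]
  exact ⟨hdx, hdx', hdy, hdy', hx, by rw [Lminus_comm A s x y, hy, hmoment]⟩

/-- For every `s < 0` and all `x, y ∈ ℝ`, `L⁻_s` is twice differentiable in each
variable and satisfies
`∂ₓ² L⁻_s(x,y) − x·L⁻_s(x,y) = −∫_{−∞}^0 z·e^{−z·s}·A(x+z)·A(y+z) dz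
  = ∂_y² L⁻_s(x,y) − y·L⁻_s(x,y)`;
in particular `d²/dx² − x` in the first variable agrees with `d²/dy² − y` in the
second variable. -/
theorem lminus_airy_operator_symm
    (A : ℝ → ℝ) (hA : ContDiff ℝ 2 A)
    (hAiry : ∀ t : ℝ, deriv (deriv A) t = t * A t)
    (C : ℝ) (hC : 0 < C)
    (hA1 : ∀ t : ℝ, 0 ≤ t → |A t| ≤ C * Real.exp (-t))
    (hA1' : ∀ t : ℝ, 0 ≤ t → |deriv A t| ≤ C * Real.exp (-t))
    (hA2 : ∀ t : ℝ, t ≤ 0 → |A t| ≤ C * (1 + |t|))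
    (hA2' : ∀ t : ℝ, t ≤ 0 → |deriv A t| ≤ C * (1 + |t|))
    (s : ℝ) (hs : s < 0) (x y : ℝ) :
    DifferentiableAt ℝ (fun x' : ℝ => Lminus A s x' y) x ∧
    DifferentiableAt ℝ (deriv (fun x' : ℝ => Lminus A s x' y)) x ∧
    DifferentiableAt ℝ (fun y' : ℝ => Lminus A s x y') y ∧
    DifferentiableAt ℝ (deriv (fun y' : ℝ => Lminus A s x y')) y ∧
    deriv (deriv (fun x' : ℝ => Lminus A s x' y)) x - x * Lminus A s x y
      = -∫ z in Set.Iio (0 : ℝ), z * Real.exp (-(z * s)) * A (x + z) * A (y + z) ∧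
    (-∫ z in Set.Iio (0 : ℝ), z * Real.exp (-(z * s)) * A (x + z) * A (y + z))
      = deriv (deriv (fun y' : ℝ => Lminus A s x y')) y - y * Lminus A s x y :=
  lminus_airy_operator_symm_general A hA hAiry C hA1 hA1' hA2 hA2' s hs x y
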